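/- arXiv:1411.5661 — 2 statements merged into one kernel-verified Lean document; each statement's English description precedes it below -/
import Mathlib

section
/- W(K_{14}) = 21: the complete graph on 14 vertices has an interval 21-coloring but no interval 22-coloring. -/
/-- An interval `t`-coloring of the complete graph on `Fin m`:
a proper edge-coloring with colors in `{1,…,t}`, using every color,
such that the spectrum (set of colors incident to each vertex) is an
interval of consecutive integers. -/
def IsIntervalColoring (m t : ℕ) (c : Sym2 (Fin m) → ℕ) : Prop :=
  (∀ u v w : Fin m, u ≠ v → u ≠ w → v ≠ w → c s(u, v) ≠ c s(u, w)) ∧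
  (∀ u v : Fin m, u ≠ v → c s(u, v) ∈ Finset.Icc 1 t) ∧
  (∀ k : ℕ, 1 ≤ k → k ≤ t → ∃ u v : Fin m, u ≠ v ∧ c s(u, v) = k) ∧
  (∀ v : Fin m, ∃ a b : ℕ,
    {k : ℕ | ∃ u : Fin m, u ≠ v ∧ c s(u, v) = k} = Set.Icc a b)

/-- `W m` is the greatest `t` for which the complete graph on `m` vertices
has an interval `t`-coloring. -/
noncomputable def W (m : ℕ) : ℕ :=
  sSup {t : ℕ | ∃ c : Sym2 (Fin m) → ℕ, IsIntervalColoring m t c}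


/-!
At each vertex `v` an interval coloring of `K_{n+2}` shows the `n + 1` colors
`A v, …, A v + n`. For an interval 22-coloring of `K_{14}` this forces `1 ≤ A v ≤ 10`, and the
profile `p j = #{v | A v ≤ j}` is pinned down: a vertex with `A v = 1` and one with `A v = 10`
give `j + 1 ≤ p j ≤ j + 3`, and `p j` is even because the edges of color `j` perfectly match
`{v | A v ≤ j}`. Every edge of the cut between `{A ≤ j}` and `{A > j}` has a color in
`(j, j + 12]`, and the edges of one color `k` form a matching, so there are at most
`min (p j - p (k - 13)) (p k - p j)` of them. Counting the `p j * (14 - p j)` cut edges this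
way fails at `j = 3`, `5` or `7` for each of the admissible profiles.

Recoloring the edges of color `t + 1` with `t - n` turns an interval `(t + 1)`-coloring of
`K_{n+2}` into an interval `t`-coloring once `t ≥ n + 1`, so no `t ≥ 22` occurs either, while an
explicit interval 21-coloring exists.
-/

open Finset

section Counting

variable {α : Type*} [Fintype α]

def lowCount (A : α → ℕ) (j : ℕ) : ℕ := #{v | A v ≤ j}

def cut (A : α → ℕ) (j : ℕ) : Finset (α × α) :=
  ({v | A v ≤ j} : Finset α) ×ˢ ({v | j < A v} : Finset α)

lemma mem_cut {A : α → ℕ} {j : ℕ} {q : α × α} : q ∈ cut A j ↔ A q.1 ≤ j ∧ j < A q.2 := by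
  simp [cut]

lemma ne_of_mem_cut {A : α → ℕ} {j : ℕ} {q : α × α} (hq : q ∈ cut A j) : q.1 ≠ q.2 := by
  rintro h
  rw [mem_cut, h] at hq
  omega

lemma lowCount_add_card_lt (A : α → ℕ) (j : ℕ) :
    lowCount A j + #{v | j < A v} = Fintype.card α := by
  rw [lowCount]
  simpa only [not_le, card_univ] using card_filter_add_card_filter_not (s := univ) (A · ≤ j)

lemma lowCount_sub_lowCount [DecidableEq α] (A : α → ℕ) {a b : ℕ} (hab : a ≤ b) :
    lowCount A b - lowCount A a = #{v | a < A v ∧ A v ≤ b} := by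
  rw [lowCount, lowCount,
    ← card_sdiff_of_subset (monotone_filter_right _ fun _ _ hv => hv.trans hab)]
  congr 1
  ext v
  simp [and_comm]

lemma card_cut (A : α → ℕ) (j : ℕ) :
    #(cut A j) = lowCount A j * (Fintype.card α - lowCount A j) := by
  rw [cut, card_product, ← lowCount_add_card_lt A j, Nat.add_sub_cancel_left, lowCount]

end Counting

variable {n t : ℕ} {c : Sym2 (Fin (n + 2)) → ℕ}

def colorSpectrum (c : Sym2 (Fin (n + 2)) → ℕ) (v : Fin (n + 2)) : Finset ℕ :=
  (univ.erase v).image fun u => c s(u, v)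

lemma mem_colorSpectrum {v : Fin (n + 2)} {k : ℕ} :
    k ∈ colorSpectrum c v ↔ ∃ u, u ≠ v ∧ c s(u, v) = k := by
  simp [colorSpectrum]

lemma card_colorSpectrum_eq_iff {v : Fin (n + 2)} :
    #(colorSpectrum c v) = n + 1 ↔ Set.InjOn (fun u => c s(u, v)) (univ.erase v : Finset _) := by
  rw [colorSpectrum, ← card_image_iff, card_erase_of_mem (mem_univ v), card_univ,
    Fintype.card_fin]
  rfl

lemma eq_of_color_eq_of_colorSpectrum_eq_Icc {v u₁ u₂ : Fin (n + 2)} {a : ℕ}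
    (hv : colorSpectrum c v = Icc a (a + n)) (hu₁ : u₁ ≠ v) (hu₂ : u₂ ≠ v)
    (hc : c s(u₁, v) = c s(u₂, v)) : u₁ = u₂ := by
  have hinj := card_colorSpectrum_eq_iff.1 (by rw [hv, Nat.card_Icc]; omega)
  exact hinj (by simpa using hu₁) (by simpa using hu₂) hc

theorem isIntervalColoring_iff :
    IsIntervalColoring (n + 2) t c ↔
      (∀ v, ∃ a, 1 ≤ a ∧ a + n ≤ t ∧ colorSpectrum c v = Icc a (a + n)) ∧
        ∀ k ∈ Icc 1 t, ∃ v, k ∈ colorSpectrum c v := by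
  constructor
  · rintro ⟨hproper, hrange, hsurj, hinterval⟩
    refine ⟨fun v => ?_, fun k hk => ?_⟩
    · obtain ⟨a, b, hab⟩ := hinterval v
      have hspec : colorSpectrum c v = Icc a b := by
        rw [← coe_inj, coe_Icc, ← hab]
        ext k
        simp [mem_colorSpectrum]
      have hcard : #(colorSpectrum c v) = n + 1 := by
        refine card_colorSpectrum_eq_iff.2 fun u₁ hu₁ u₂ hu₂ hc => ?_
        by_contra hne
        refine hproper v u₁ u₂ ?_ ?_ hne ?_
        · simpa [eq_comm] using hu₁
        · simpa [eq_comm] using hu₂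
        · simpa only [Sym2.eq_swap] using hc
      rw [hspec, Nat.card_Icc] at hcard
      obtain rfl : b = a + n := by omega
      have hbound : ∀ k ∈ colorSpectrum c v, k ∈ Icc 1 t := by
        intro k hk
        obtain ⟨u, hu, rfl⟩ := mem_colorSpectrum.1 hk
        exact hrange u v hu
      have ha := mem_Icc.1 (hbound a (by simp [hspec]))
      have hb := mem_Icc.1 (hbound (a + n) (by simp [hspec]))
      exact ⟨a, ha.1, hb.2, hspec⟩
    · obtain ⟨u, v, huv, rfl⟩ := hsurj k (mem_Icc.1 hk).1 (mem_Icc.1 hk).2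
      exact ⟨v, mem_colorSpectrum.2 ⟨u, huv, rfl⟩⟩
  · rintro ⟨hspec, hsurj⟩
    choose a ha₁ hat ha using hspec
    refine ⟨fun u v w huv huw hvw hc => hvw ?_, fun u v huv => ?_, fun k hk₁ hkt => ?_,
      fun v => ⟨a v, a v + n, ?_⟩⟩
    · exact eq_of_color_eq_of_colorSpectrum_eq_Icc (ha u) huv.symm huw.symm
        (by simpa only [Sym2.eq_swap] using hc)
    · have := mem_Icc.1 ((ha v) ▸ mem_colorSpectrum.2 ⟨u, huv, rfl⟩)
      have := ha₁ v
      have := hat v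
      exact mem_Icc.2 ⟨by omega, by omega⟩
    · obtain ⟨v, hv⟩ := hsurj k (mem_Icc.2 ⟨hk₁, hkt⟩)
      obtain ⟨u, huv, rfl⟩ := mem_colorSpectrum.1 hv
      exact ⟨u, v, huv, rfl⟩
    · ext k
      simp [← mem_colorSpectrum, ha v]

lemma colorSpectrum_comp (g : ℕ → ℕ) (v : Fin (n + 2)) :
    colorSpectrum (g ∘ c) v = (colorSpectrum c v).image g := by
  simp only [colorSpectrum, image_image]
  rfl

lemma image_Icc_recolor_top {a : ℕ} (ha₁ : 1 ≤ a) (hat : a + n ≤ t + 1) (ht : n + 1 ≤ t) :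
    ∃ b, 1 ≤ b ∧ b + n ≤ t ∧
      (Icc a (a + n)).image (fun k => if k = t + 1 then t - n else k) = Icc b (b + n) := by
  by_cases htop : a + n = t + 1
  · refine ⟨t - n, by omega, by omega, ?_⟩
    ext k
    simp only [mem_image, mem_Icc]
    constructor
    · rintro ⟨l, hl, rfl⟩
      split_ifs <;> omega
    · intro hk
      by_cases hkt : k = t - n
      · exact ⟨t + 1, by omega, by simp [hkt]⟩
      · exact ⟨k, by omega, by rw [if_neg (by omega)]⟩
  · refine ⟨a, ha₁, by omega, ?_⟩
    rw [image_congr fun k hk => if_neg (by have := (mem_Icc.1 hk).2; omega), image_id']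

theorem IsIntervalColoring.exists_of_succ (ht : n + 1 ≤ t)
    (h : IsIntervalColoring (n + 2) (t + 1) c) :
    ∃ c' : Sym2 (Fin (n + 2)) → ℕ, IsIntervalColoring (n + 2) t c' := by
  obtain ⟨hspec, hsurj⟩ := isIntervalColoring_iff.1 h
  set g : ℕ → ℕ := fun k => if k = t + 1 then t - n else k
  refine ⟨g ∘ c, isIntervalColoring_iff.2 ⟨fun v => ?_, fun k hk => ?_⟩⟩
  · obtain ⟨a, ha₁, hat, hv⟩ := hspec v
    rw [colorSpectrum_comp, hv]
    exact image_Icc_recolor_top ha₁ hat ht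
  · obtain ⟨v, hv⟩ := hsurj k (Icc_subset_Icc_right (by omega) hk)
    have hgk : g k = k := if_neg (by have := (mem_Icc.1 hk).2; omega)
    refine ⟨v, ?_⟩
    rw [colorSpectrum_comp, ← hgk]
    exact mem_image_of_mem g hv

theorem exists_isIntervalColoring_of_le {s : ℕ} (ht : n + 1 ≤ t) (hts : t ≤ s)
    (h : ∃ c : Sym2 (Fin (n + 2)) → ℕ, IsIntervalColoring (n + 2) s c) :
    ∃ c : Sym2 (Fin (n + 2)) → ℕ, IsIntervalColoring (n + 2) t c := by
  induction s, hts using Nat.le_induction with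
  | base => exact h
  | succ s hts ih =>
    obtain ⟨c, hc⟩ := h
    exact ih (hc.exists_of_succ (ht.trans hts))

section Base

variable {A : Fin (n + 2) → ℕ}

lemma color_bounds (hA : ∀ v, colorSpectrum c v = Icc (A v) (A v + n)) {u v : Fin (n + 2)}
    (huv : u ≠ v) :
    A u ≤ c s(u, v) ∧ c s(u, v) ≤ A u + n ∧ A v ≤ c s(u, v) ∧ c s(u, v) ≤ A v + n := by
  have hv := mem_Icc.1 (hA v ▸ mem_colorSpectrum.2 ⟨u, huv, rfl⟩)
  have hu := mem_Icc.1 (hA u ▸ mem_colorSpectrum.2 ⟨v, huv.symm, congrArg c Sym2.eq_swap⟩)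
  exact ⟨hu.1, hu.2, hv.1, hv.2⟩

lemma card_le_of_forall_color_mem {v : Fin (n + 2)} {a : ℕ}
    (hv : colorSpectrum c v = Icc a (a + n)) {s : Finset (Fin (n + 2))} {I : Finset ℕ}
    (hvs : v ∉ s) (hI : ∀ w ∈ s, c s(w, v) ∈ I) : #s ≤ #I :=
  card_le_card_of_injOn (fun w => c s(w, v)) hI fun _ hw₁ _ hw₂ hc =>
    eq_of_color_eq_of_colorSpectrum_eq_Icc hv (ne_of_mem_of_not_mem hw₁ hvs)
      (ne_of_mem_of_not_mem hw₂ hvs) hc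

lemma card_lt_le_of_le (hA : ∀ v, colorSpectrum c v = Icc (A v) (A v + n)) {v : Fin (n + 2)}
    {j : ℕ} (hv : A v ≤ j) : #{w | j < A w} ≤ A v + n - j := by
  rw [← Nat.card_Ioc]
  refine card_le_of_forall_color_mem (hA v) (by simpa using hv) fun w hw => ?_
  rw [mem_filter_univ] at hw
  have := color_bounds hA (u := w) (v := v) (by rintro rfl; omega)
  rw [mem_Ioc]
  omega

lemma lowCount_le_of_lt (hA : ∀ v, colorSpectrum c v = Icc (A v) (A v + n)) {v : Fin (n + 2)}
    {j : ℕ} (hv : j < A v) : lowCount A j ≤ j + n + 1 - A v := by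
  rw [lowCount, ← Nat.card_Icc]
  refine card_le_of_forall_color_mem (hA v) ?_ fun w hw => ?_
  · simpa using hv
  · rw [mem_filter_univ] at hw
    have := color_bounds hA (u := w) (v := v) (by rintro rfl; omega)
    rw [mem_Icc]
    omega

lemma even_lowCount (hA : ∀ v, colorSpectrum c v = Icc (A v) (A v + n)) (hA₁ : ∀ v, 1 ≤ A v)
    {j : ℕ} (hj : j ≤ n + 1) : Even (lowCount A j) := by
  set s : Finset (Fin (n + 2)) := {v | A v ≤ j}
  have hpartner : ∀ v ∈ s, ∃ u, u ≠ v ∧ c s(u, v) = j := by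
    intro v hv
    have := hA₁ v
    exact mem_colorSpectrum.1 (hA v ▸ mem_Icc.2 ⟨(mem_filter_univ v).1 hv, by omega⟩)
  choose! g hg_ne hg_color using hpartner
  have hg_mem : ∀ v ∈ s, g v ∈ s := fun v hv =>
    (mem_filter_univ _).2 ((color_bounds hA (hg_ne v hv)).1.trans (hg_color v hv).le)
  have hg_invol : ∀ v ∈ s, g (g v) = v := fun v hv =>
    eq_of_color_eq_of_colorSpectrum_eq_Icc (hA (g v)) (hg_ne _ (hg_mem v hv)) (hg_ne v hv).symm
      (by rw [hg_color _ (hg_mem v hv), Sym2.eq_swap, hg_color v hv])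
  -- the color-`j` edges pair up the vertices of `s`
  have hsum : ∑ _v ∈ s, (1 : ZMod 2) = 0 :=
    sum_involution (fun v _ => g v) (fun _ _ => by decide) (fun v hv _ => hg_ne v hv)
      hg_mem hg_invol
  rw [lowCount, ← ZMod.natCast_eq_zero_iff_even]
  simpa using hsum

lemma card_cut_color_le_left (hA : ∀ v, colorSpectrum c v = Icc (A v) (A v + n))
    (hA₁ : ∀ v, 1 ≤ A v) {j k : ℕ} (hk : k ≤ j + n) :
    #{q ∈ cut A j | c s(q.1, q.2) = k} ≤ lowCount A j - lowCount A (k - (n + 1)) := by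
  rw [lowCount_sub_lowCount A (by omega)]
  refine card_le_card_of_injOn Prod.fst (fun q hq => ?_) fun q₁ hq₁ q₂ hq₂ hfst => ?_
  · rw [mem_coe, mem_filter] at hq
    have := mem_cut.1 hq.1
    have := color_bounds hA (ne_of_mem_cut hq.1)
    have := hA₁ q.1
    rw [mem_coe, mem_filter_univ]
    omega
  · rw [mem_coe, mem_filter] at hq₁ hq₂
    refine Prod.ext hfst (eq_of_color_eq_of_colorSpectrum_eq_Icc (hA q₁.1)
      (ne_of_mem_cut hq₁.1).symm (hfst ▸ (ne_of_mem_cut hq₂.1).symm) ?_)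
    rw [Sym2.eq_swap, hq₁.2, hfst, Sym2.eq_swap, hq₂.2]

lemma card_cut_color_le_right (hA : ∀ v, colorSpectrum c v = Icc (A v) (A v + n))
    {j k : ℕ} (hk : j ≤ k) :
    #{q ∈ cut A j | c s(q.1, q.2) = k} ≤ lowCount A k - lowCount A j := by
  rw [lowCount_sub_lowCount A hk]
  refine card_le_card_of_injOn Prod.snd (fun q hq => ?_) fun q₁ hq₁ q₂ hq₂ hsnd => ?_
  · rw [mem_coe, mem_filter] at hq
    have := mem_cut.1 hq.1
    have := color_bounds hA (ne_of_mem_cut hq.1)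
    rw [mem_coe, mem_filter_univ]
    omega
  · rw [mem_coe, mem_filter] at hq₁ hq₂
    refine Prod.ext (eq_of_color_eq_of_colorSpectrum_eq_Icc (hA q₁.2)
      (ne_of_mem_cut hq₁.1) (hsnd ▸ ne_of_mem_cut hq₂.1) ?_) hsnd
    rw [hq₁.2, hsnd, hq₂.2]

theorem lowCount_mul_le_sum_min (hA : ∀ v, colorSpectrum c v = Icc (A v) (A v + n))
    (hA₁ : ∀ v, 1 ≤ A v) (j : ℕ) :
    lowCount A j * (n + 2 - lowCount A j) ≤
      ∑ k ∈ Ioc j (j + n),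
        min (lowCount A j - lowCount A (k - (n + 1))) (lowCount A k - lowCount A j) := by
  have hmaps : ∀ q ∈ cut A j, c s(q.1, q.2) ∈ Ioc j (j + n) := by
    intro q hq
    have := mem_cut.1 hq
    have := color_bounds hA (ne_of_mem_cut hq)
    rw [mem_Ioc]
    omega
  calc lowCount A j * (n + 2 - lowCount A j) = #(cut A j) := by rw [card_cut, Fintype.card_fin]
    _ = ∑ k ∈ Ioc j (j + n), #{q ∈ cut A j | c s(q.1, q.2) = k} :=
      card_eq_sum_card_fiberwise hmaps
    _ ≤ _ := sum_le_sum fun k hk =>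
      le_min (card_cut_color_le_left hA hA₁ (mem_Ioc.1 hk).2)
        (card_cut_color_le_right hA (mem_Ioc.1 hk).1.le)

end Base

lemma no_admissible_profile (p : ℕ → ℕ) (h₀ : p 0 = 0) (htop : ∀ j, 10 ≤ j → p j = 14)
    (hbounds : ∀ j ∈ Icc 1 9, j + 1 ≤ p j ∧ p j ≤ j + 3 ∧ Even (p j))
    (hcut : ∀ j, p j * (14 - p j) ≤ ∑ k ∈ Ioc j (j + 12), min (p j - p (k - 13)) (p k - p j)) :
    False := by
  simp only [show Icc 1 9 = {1, 2, 3, 4, 5, 6, 7, 8, 9} by decide, forall_mem_insert,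
    mem_singleton, forall_eq, Nat.even_iff] at hbounds
  obtain ⟨h1, h2, h3, h4, h5, h6, h7, h8, h9⟩ := hbounds
  have hc3 := hcut 3
  have hc5 := hcut 5
  have hc7 := hcut 7
  simp (disch := omega) only [sum_Ioc_succ_top, Ioc_self, sum_empty, Nat.reduceAdd,
    Nat.reduceSub, htop, h₀] at hc3 hc5 hc7
  obtain h3 | h3 : p 3 = 4 ∨ p 3 = 6 := by omega
  all_goals obtain h5 | h5 : p 5 = 6 ∨ p 5 = 8 := by omega
  all_goals obtain h7 | h7 : p 7 = 8 ∨ p 7 = 10 := by omega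
  all_goals rw [h3] at hc3; rw [h5] at hc5; rw [h7] at hc7; omega

theorem not_isIntervalColoring_fourteen_twentyTwo (c : Sym2 (Fin 14) → ℕ) :
    ¬ IsIntervalColoring 14 22 c := by
  intro h
  obtain ⟨hspec, hsurj⟩ := isIntervalColoring_iff.1 h
  choose A hA₁ hA₂₂ hA using hspec
  have hbase (k : ℕ) (hk : k ∈ Icc 1 22) : ∃ v, A v ≤ k ∧ k ≤ A v + 12 := by
    obtain ⟨v, hv⟩ := hsurj k hk
    exact ⟨v, mem_Icc.1 (hA v ▸ hv)⟩
  obtain ⟨v₁, hv₁⟩ : ∃ v, A v = 1 := by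
    obtain ⟨v, hv⟩ := hbase 1 (by simp)
    exact ⟨v, by have := hA₁ v; omega⟩
  obtain ⟨v₁₀, hv₁₀⟩ : ∃ v, A v = 10 := by
    obtain ⟨v, hv⟩ := hbase 22 (by simp)
    exact ⟨v, by have := hA₂₂ v; omega⟩
  refine no_admissible_profile (lowCount A) ?_ (fun j hj => ?_) (fun j hj => ?_)
    (lowCount_mul_le_sum_min hA hA₁)
  · rw [lowCount, card_eq_zero, filter_eq_empty_iff]
    exact fun v _ => by have := hA₁ v; omega
  · rw [lowCount, filter_true_of_mem fun v _ => by have := hA₂₂ v; omega, card_univ,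
      Fintype.card_fin]
  · rw [mem_Icc] at hj
    have hlow := card_lt_le_of_le hA (v := v₁) (j := j) (by omega)
    have hup := lowCount_le_of_lt hA (v := v₁₀) (j := j) (by omega)
    have hsum := lowCount_add_card_lt A j
    rw [Fintype.card_fin] at hsum
    exact ⟨by omega, by omega, even_lowCount hA hA₁ (by omega)⟩

def coloring21Table : Fin 14 → Fin 14 → ℕ :=
  ![![0, 1, 2, 3, 4, 7, 5, 6, 8, 13, 9, 10, 11, 12],
    ![1, 0, 3, 2, 5, 4, 6, 7, 12, 8, 10, 13, 9, 11],
    ![2, 3, 0, 4, 6, 5, 7, 8, 10, 12, 11, 9, 13, 14],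
    ![3, 2, 4, 0, 7, 6, 8, 5, 14, 9, 12, 11, 10, 13],
    ![4, 5, 6, 7, 0, 8, 9, 10, 11, 15, 13, 14, 12, 16],
    ![7, 4, 5, 6, 8, 0, 11, 13, 16, 10, 14, 12, 15, 9],
    ![5, 6, 7, 8, 9, 11, 0, 12, 13, 14, 15, 16, 17, 10],
    ![6, 7, 8, 5, 10, 13, 12, 0, 9, 11, 16, 17, 14, 15],
    ![8, 12, 10, 14, 11, 16, 13, 9, 0, 17, 19, 15, 18, 20],
    ![13, 8, 12, 9, 15, 10, 14, 11, 17, 0, 18, 20, 16, 19],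
    ![9, 10, 11, 12, 13, 14, 15, 16, 19, 18, 0, 21, 20, 17],
    ![10, 13, 9, 11, 14, 12, 16, 17, 15, 20, 21, 0, 19, 18],
    ![11, 9, 13, 10, 12, 15, 17, 14, 18, 16, 20, 19, 0, 21],
    ![12, 11, 14, 13, 16, 9, 10, 15, 20, 19, 17, 18, 21, 0]]

def coloring21 : Sym2 (Fin 14) → ℕ :=
  Sym2.lift ⟨coloring21Table, by decide⟩

def coloring21Base : Fin 14 → ℕ := ![1, 1, 2, 2, 4, 4, 5, 5, 8, 8, 9, 9, 9, 9]

theorem isIntervalColoring_coloring21 : IsIntervalColoring 14 21 coloring21 := by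
  have hspec : ∀ v, 1 ≤ coloring21Base v ∧ coloring21Base v + 12 ≤ 21 ∧
      colorSpectrum coloring21 v = Icc (coloring21Base v) (coloring21Base v + 12) := by
    decide
  exact isIntervalColoring_iff.2 ⟨fun v => ⟨coloring21Base v, hspec v⟩, by decide⟩

/-- `W(K_{14}) = 21`: `K_{14}` has an interval 21-coloring but no interval
22-coloring. -/
theorem statement_10 :
    W 14 = 21 ∧
    (∃ c : Sym2 (Fin 14) → ℕ, IsIntervalColoring 14 21 c) ∧
    (∀ c : Sym2 (Fin 14) → ℕ, ¬ IsIntervalColoring 14 22 c) := by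
  have h21 : ∃ c, IsIntervalColoring 14 21 c := ⟨coloring21, isIntervalColoring_coloring21⟩
  refine ⟨IsGreatest.csSup_eq ⟨h21, fun t ht => ?_⟩, h21,
    not_isIntervalColoring_fourteen_twentyTwo⟩
  by_contra! ht22
  obtain ⟨c, hc⟩ := exists_isIntervalColoring_of_le (n := 12) (by norm_num) ht22 ht
  exact not_isIntervalColoring_fourteen_twentyTwo c hc
end

section
/- Let α be an interval t-coloring of K_{2n} with shift vector (b_1, b_2, …, b_{n-1}), and suppose that for some k with 2 ≤ k ≤ n-2 the initial segment is saturated, i.e., b_1 + b_2 + … + b_k = 2k - 1. Then b_{k+1} ≤ 1. -/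
/-- The smallest color on an edge incident to `v`. -/
noncomputable def minColor (m : ℕ) (c : Sym2 (Fin m) → ℕ) (v : Fin m) : ℕ :=
  sInf {k : ℕ | ∃ u : Fin m, u ≠ v ∧ c s(u, v) = k}

/-- The list `m_1 ≤ m_2 ≤ … ≤ m_{2n}` of smallest incident colors of the
vertices, in nondecreasing order. -/
noncomputable def sortedMins (m : ℕ) (c : Sym2 (Fin m) → ℕ) : List ℕ :=
  ((Finset.univ : Finset (Fin m)).val.map (minColor m c)).sort (· ≤ ·)

/-- The `i`-th entry `b_i = m_{2i+1} - m_{2i-1}` of the shift vector of a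
coloring of `K_{2n}` (1-based positions; `m_j` is the `j`-th sorted smallest
incident color). Meaningful for `1 ≤ i ≤ n-1`. -/
noncomputable def shiftVec (n : ℕ) (c : Sym2 (Fin (2 * n)) → ℕ) (i : ℕ) : ℕ :=
  (sortedMins (2 * n) c).getD (2 * i) 0 - (sortedMins (2 * n) c).getD (2 * i - 2) 0

open Finset

/-!
Write `s v` for the smallest color at `v`. Properness and the interval condition make the
spectrum of every vertex exactly `[s v, s v + 2n - 2]`; in particular some vertex has `s = 1`, and
its partners for the colors `1, …, j` show that at least `j + 1` vertices have `s ≤ j`.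

Saturation gives `m_{2k+1} ≥ 2k`, so `b_{k+1} ≥ 2` would give `m_{2k+3} ≥ 2k + 2`. Then the set `A`
of vertices with `s ≤ 2k + 1` has exactly `2k + 2` elements, two of which, `x` and `y`, have
`s ≥ 2k`. A vertex `v ∈ A` sees each color of `[s v, 2k + 1]` exactly once, always towards a vertex
of `A`, so exactly `s v - 1` of its edges inside `A` have a color above `2k + 1`. At `x` and `y`
these high edges number at least `4k - 2`. But apart from the edge `xy` they end in the other
`2k` vertices `u` of `A`, each receiving at most `min (s u - 1) 2` of them; since two of these
have `s = 1` and a third has `s ≤ 2`, that allows at most `2 + 4k - 5`.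
-/

theorem List.Pairwise.countP_le_of_lt_getElem {α : Type*} [LinearOrder α] {L : List α}
    (hL : L.Pairwise (· ≤ ·)) {i : ℕ} (hi : i < L.length) {x : α} (hx : x < L[i]) :
    L.countP (fun y => y ≤ x) ≤ i := by
  have hdrop : (L.drop i).countP (fun y => y ≤ x) = 0 := by
    have hsorted := hL.sublist (List.drop_sublist i L)
    rw [List.drop_eq_getElem_cons hi, List.pairwise_cons] at hsorted
    rw [List.countP_eq_zero, List.drop_eq_getElem_cons hi]
    intro a ha
    simp only [decide_eq_true_eq, not_le]
    rcases List.mem_cons.1 ha with rfl | ha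
    exacts [hx, hx.trans_le (hsorted.1 a ha)]
  calc L.countP (fun y => y ≤ x)
      = (L.take i).countP (fun y => y ≤ x) + (L.drop i).countP (fun y => y ≤ x) := by
        rw [← List.countP_append, List.take_append_drop]
    _ ≤ i := by
        rw [hdrop, add_zero]
        exact List.countP_le_length.trans (List.length_take_le i L)

theorem Finset.sum_min_two_add_card_filter {ι : Type*} (S : Finset ι) (f : ι → ℕ) :
    ∑ i ∈ S, min (f i) 2 + #{i ∈ S | f i ≤ 1} + #{i ∈ S | f i = 0} = 2 * #S := by
  rw [card_filter, card_filter, ← sum_add_distrib, ← sum_add_distrib, card_eq_sum_ones, mul_sum]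
  refine sum_congr rfl fun i _ => ?_
  split_ifs <;> omega

theorem SimpleGraph.degree_add_degree_le {V : Type*} [Fintype V] [DecidableEq V]
    (G : SimpleGraph V) [DecidableRel G.Adj] {x y : V} (hxy : x ≠ y) :
    G.degree x + G.degree y ≤ 2 + ∑ u ∈ univ \ {x, y}, min (G.degree u) 2 := by
  have hdeg : ∀ z, G.degree z = ∑ w, if G.Adj z w then 1 else 0 := fun z => by
    rw [← card_neighborFinset_eq_degree, neighborFinset_eq_filter, card_filter]
  have hpair : ∀ w, ((if G.Adj x w then 1 else 0) + if G.Adj y w then 1 else 0)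
      ≤ min (G.degree w) 2 := by
    intro w
    have hle : #{z ∈ {x, y} | G.Adj w z} ≤ G.degree w := by
      rw [← card_neighborFinset_eq_degree, neighborFinset_eq_filter]
      exact card_le_card (filter_subset_filter _ (subset_univ _))
    rw [card_filter, sum_pair hxy] at hle
    simp only [G.adj_comm w] at hle
    split_ifs at * <;> omega
  rw [hdeg, hdeg, ← sum_add_distrib, ← sum_sdiff (subset_univ {x, y}), sum_pair hxy,
    add_comm]
  simp only [SimpleGraph.irrefl, if_false, G.adj_comm y x]
  gcongr ?_ + ?_
  · split_ifs <;> omega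
  · exact sum_le_sum fun w _ => hpair w

section Coloring

variable {m t : ℕ} {c : Sym2 (Fin m) → ℕ}

def incidentColors (c : Sym2 (Fin m) → ℕ) (v : Fin m) : Finset ℕ :=
  (univ.erase v).image fun u => c s(u, v)

theorem coe_incidentColors (c : Sym2 (Fin m) → ℕ) (v : Fin m) :
    (incidentColors c v : Set ℕ) = {k | ∃ u, u ≠ v ∧ c s(u, v) = k} := by
  ext k
  simp [incidentColors]

theorem minColor_right_le {u v : Fin m} (huv : u ≠ v) : minColor m c v ≤ c s(u, v) :=
  Nat.sInf_le ⟨u, huv, rfl⟩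

theorem minColor_left_le {u v : Fin m} (huv : u ≠ v) : minColor m c u ≤ c s(u, v) :=
  Sym2.eq_swap (a := v) ▸ minColor_right_le huv.symm

theorem IsIntervalColoring.injOn_color (hc : IsIntervalColoring m t c) (v : Fin m) :
    Set.InjOn (fun u => c s(u, v)) {u | u ≠ v} := by
  intro u hu w hw h
  by_contra huw
  refine hc.1 v u w (Ne.symm hu) (Ne.symm hw) huw ?_
  rw [Sym2.eq_swap (a := v) (b := u), Sym2.eq_swap (a := v) (b := w)]
  exact h

theorem IsIntervalColoring.incidentColors_eq_Icc (hc : IsIntervalColoring m t c) (hm : 1 < m)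
    (v : Fin m) :
    incidentColors c v = Icc (minColor m c v) (minColor m c v + (m - 2)) := by
  obtain ⟨a, b, hab⟩ := hc.2.2.2 v
  have hIcc : incidentColors c v = Icc a b := by
    rw [← coe_inj, coe_incidentColors, hab, coe_Icc]
  have hcard : #(incidentColors c v) = m - 1 := by
    rw [incidentColors, card_image_of_injOn, card_erase_of_mem (mem_univ v), card_univ,
      Fintype.card_fin]
    exact (hc.injOn_color v).mono fun u hu => by simpa using hu
  rw [hIcc, Nat.card_Icc] at hcard
  have hmin : minColor m c v = a := by
    rw [minColor, hab, csInf_Icc (by omega)]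
  rw [hIcc, hmin, show b = a + (m - 2) by omega]

theorem IsIntervalColoring.exists_color_eq (hc : IsIntervalColoring m t c) (hm : 1 < m)
    {v : Fin m} {j : ℕ} (h₁ : minColor m c v ≤ j) (h₂ : j ≤ minColor m c v + (m - 2)) :
    ∃ u, u ≠ v ∧ c s(u, v) = j := by
  have hj : j ∈ incidentColors c v := by
    rw [hc.incidentColors_eq_Icc hm]
    exact mem_Icc.2 ⟨h₁, h₂⟩
  simpa [incidentColors] using hj

theorem IsIntervalColoring.one_le_minColor (hc : IsIntervalColoring m t c) (hm : 1 < m)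
    (v : Fin m) :
    1 ≤ minColor m c v := by
  obtain ⟨u, huv, hu⟩ := hc.exists_color_eq hm le_rfl (Nat.le_add_right _ _)
  have hmem := hc.2.1 u v huv
  rw [hu, mem_Icc] at hmem
  exact hmem.1

theorem IsIntervalColoring.exists_minColor_eq_one (hc : IsIntervalColoring m t c) (hm : 1 < m) :
    ∃ v, minColor m c v = 1 := by
  have ht : 1 ≤ t := by
    have hmem := hc.2.1 ⟨0, by omega⟩ ⟨1, hm⟩ (by simp [Fin.ext_iff])
    rw [mem_Icc] at hmem
    omega
  obtain ⟨u, v, huv, hcol⟩ := hc.2.2.1 1 le_rfl ht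
  exact ⟨v, le_antisymm (hcol ▸ minColor_right_le huv) (hc.one_le_minColor hm v)⟩

theorem IsIntervalColoring.card_filter_color_le (hc : IsIntervalColoring m t c) (hm : 1 < m)
    (v : Fin m) {j : ℕ} (hj : j ≤ minColor m c v + (m - 2)) :
    #{u ∈ univ.erase v | c s(u, v) ≤ j} = j + 1 - minColor m c v := by
  have himage : {u ∈ univ.erase v | c s(u, v) ≤ j}.image (fun u => c s(u, v))
      = Icc (minColor m c v) j := by
    rw [← filter_image (p := (· ≤ j)), ← incidentColors, hc.incidentColors_eq_Icc hm]
    ext i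
    simp only [mem_filter, mem_Icc]
    omega
  rw [← card_image_of_injOn (f := fun u => c s(u, v)), himage, Nat.card_Icc]
  exact (hc.injOn_color v).mono fun u hu => (mem_erase.1 (mem_filter.1 hu).1).1

theorem IsIntervalColoring.succ_le_card_minColor_le (hc : IsIntervalColoring m t c) {j : ℕ}
    (hj : 1 ≤ j) (hjm : j < m) : j + 1 ≤ #{v | minColor m c v ≤ j} := by
  obtain ⟨v, hv⟩ := hc.exists_minColor_eq_one (by omega)
  have hsub : insert v {u ∈ univ.erase v | c s(u, v) ≤ j} ⊆
      ({w | minColor m c w ≤ j} : Finset (Fin m)) := by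
    intro w hw
    rw [mem_filter]
    refine ⟨mem_univ w, ?_⟩
    rcases mem_insert.1 hw with rfl | hw
    · omega
    · rw [mem_filter, mem_erase] at hw
      exact (minColor_left_le hw.1.1).trans hw.2
  calc j + 1 = #(insert v {u ∈ univ.erase v | c s(u, v) ≤ j}) := by
        rw [card_insert_of_notMem (by simp), hc.card_filter_color_le (by omega) v (by omega), hv]
        omega
    _ ≤ _ := card_le_card hsub

theorem length_sortedMins : (sortedMins m c).length = m := by
  simp [sortedMins]

theorem mem_sortedMins {y : ℕ} : y ∈ sortedMins m c ↔ ∃ v, minColor m c v = y := by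
  simp [sortedMins]

theorem countP_sortedMins (x : ℕ) :
    (sortedMins m c).countP (fun y => y ≤ x) = #{v | minColor m c v ≤ x} := by
  rw [← Multiset.coe_countP, sortedMins, Multiset.sort_eq, Multiset.countP_map]
  rfl

theorem getD_sortedMins_le_getD {i j : ℕ} (hij : i ≤ j) (hj : j < m) :
    (sortedMins m c).getD i 0 ≤ (sortedMins m c).getD j 0 := by
  have hj' : j < (sortedMins m c).length := length_sortedMins.symm ▸ hj
  rw [List.getD_eq_getElem _ _ (hij.trans_lt hj'), List.getD_eq_getElem _ _ hj']
  rcases hij.eq_or_lt with rfl | hlt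
  · exact le_rfl
  · exact List.pairwise_iff_getElem.1 (Multiset.pairwise_sort _ _) i j _ hj' hlt

theorem card_minColor_le_le_of_lt_getD {i x : ℕ} (hi : i < m)
    (hx : x < (sortedMins m c).getD i 0) : #{v | minColor m c v ≤ x} ≤ i := by
  have hi' : i < (sortedMins m c).length := length_sortedMins.symm ▸ hi
  rw [List.getD_eq_getElem _ _ hi'] at hx
  rw [← countP_sortedMins]
  exact (Multiset.pairwise_sort _ _).countP_le_of_lt_getElem hi' hx

theorem IsIntervalColoring.one_le_getD_sortedMins (hc : IsIntervalColoring m t c)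
    (hm : 1 < m) {i : ℕ} (hi : i < m) : 1 ≤ (sortedMins m c).getD i 0 := by
  have hi' : i < (sortedMins m c).length := length_sortedMins.symm ▸ hi
  obtain ⟨v, hv⟩ := mem_sortedMins.1 (List.getD_eq_getElem _ 0 hi' ▸ List.getElem_mem hi')
  exact hv ▸ hc.one_le_minColor hm v

def highColorGraph (c : Sym2 (Fin m) → ℕ) (j : ℕ) : SimpleGraph (Fin m) where
  Adj u v := u ≠ v ∧ minColor m c u ≤ j ∧ minColor m c v ≤ j ∧ j < c s(u, v)
  symm := ⟨fun u _ h => ⟨h.1.symm, h.2.2.1, h.2.1, Sym2.eq_swap (a := u) ▸ h.2.2.2⟩⟩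
  loopless := ⟨fun _ h => h.1 rfl⟩

noncomputable instance (c : Sym2 (Fin m) → ℕ) (j : ℕ) :
    DecidableRel (highColorGraph c j).Adj :=
  fun _ _ => inferInstanceAs (Decidable (_ ∧ _ ∧ _ ∧ _))

theorem IsIntervalColoring.degree_highColorGraph (hc : IsIntervalColoring m t c) (hm : 1 < m)
    {j : ℕ} (hjm : j < m) {v : Fin m} (hv : minColor m c v ≤ j) :
    (highColorGraph c j).degree v + (j + 1 - minColor m c v) + 1 = #{w | minColor m c w ≤ j} := by
  set A : Finset (Fin m) := {w | minColor m c w ≤ j}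
  set low := {u ∈ univ.erase v | c s(u, v) ≤ j}
  have hlow : low ⊆ A.erase v := fun u hu => by
    rw [mem_filter, mem_erase] at hu
    simp only [A, mem_erase, mem_filter, mem_univ, true_and]
    exact ⟨hu.1.1, (minColor_left_le hu.1.1).trans hu.2⟩
  have hnbr : (highColorGraph c j).neighborFinset v = A.erase v \ low := by
    ext u
    rw [SimpleGraph.mem_neighborFinset]
    simp only [highColorGraph, A, low, mem_sdiff, mem_erase, mem_filter, mem_univ, true_and,
      and_true]
    rw [Sym2.eq_swap (a := v) (b := u)]
    constructor
    · rintro ⟨hvu, -, hu, hcol⟩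
      exact ⟨⟨hvu.symm, hu⟩, fun h => (not_le.2 hcol) h.2⟩
    · rintro ⟨⟨huv, hu⟩, hcol⟩
      exact ⟨huv.symm, hv, hu, not_le.1 fun h => hcol ⟨huv, h⟩⟩
  have hA : v ∈ A := by simpa [A] using hv
  have hlow_card : #low = j + 1 - minColor m c v :=
    hc.card_filter_color_le hm v (by have := hc.one_le_minColor hm v; omega)
  have hle := card_le_card hlow
  rw [← SimpleGraph.card_neighborFinset_eq_degree, hnbr, card_sdiff_of_subset hlow]
  rw [card_erase_of_mem hA] at hle ⊢
  omega

theorem IsIntervalColoring.card_filter_minColor_mem_Icc_le_one (hc : IsIntervalColoring m t c)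
    {j : ℕ} (hj : 4 ≤ j) (hA : #{v | minColor m c v ≤ j} = j + 1) :
    #{v | j - 1 ≤ minColor m c v ∧ minColor m c v ≤ j} ≤ 1 := by
  have hjm : j < m := by
    have hA_le := card_le_univ ({v | minColor m c v ≤ j} : Finset (Fin m))
    rw [Fintype.card_fin] at hA_le
    omega
  have hm : 1 < m := by omega
  by_contra! htwo
  obtain ⟨x, hx, y, hy, hxy⟩ := one_lt_card.1 htwo
  simp only [mem_filter, mem_univ, true_and] at hx hy
  have hdeg : ∀ v, minColor m c v ≤ j → (highColorGraph c j).degree v = minColor m c v - 1 :=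
    fun v hv => by
      have := hc.degree_highColorGraph hm hjm hv
      omega
  set S : Finset (Fin m) := ({v | minColor m c v ≤ j} : Finset (Fin m)) \ {x, y}
  have hxyA : {x, y} ⊆ ({v | minColor m c v ≤ j} : Finset (Fin m)) :=
    insert_subset_iff.2 ⟨by simpa using hx.2, by simpa using hy.2⟩
  have hS : #S = j - 1 := by
    rw [card_sdiff_of_subset hxyA, hA, card_pair hxy]
    omega
  have hsum : ∑ u ∈ univ \ {x, y}, min ((highColorGraph c j).degree u) 2 =
      ∑ u ∈ S, min (minColor m c u - 1) 2 := by
    symm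
    refine sum_subset_zero_on_sdiff (sdiff_subset_sdiff (subset_univ _) le_rfl) ?_ ?_
    · intro u hu
      have hu' : ¬ minColor m c u ≤ j := by
        simp only [S, mem_sdiff, mem_filter, mem_univ, true_and] at hu
        tauto
      rw [← SimpleGraph.card_neighborFinset_eq_degree, card_eq_zero.2, Nat.zero_min]
      ext w
      rw [SimpleGraph.mem_neighborFinset]
      simp [highColorGraph, hu']
    · intro u hu
      rw [hdeg u (mem_filter.1 (mem_sdiff.1 hu).1).2]
  have hsmall : ∀ u, minColor m c u ≤ 2 → u ∈ S := fun u hu => by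
    simp only [S, mem_sdiff, mem_filter, mem_univ, true_and, mem_insert, mem_singleton]
    refine ⟨by omega, ?_⟩
    rintro (rfl | rfl) <;> omega
  have h₂ : #{u | minColor m c u ≤ 2} ≤ #{u ∈ S | minColor m c u - 1 ≤ 1} :=
    card_le_card fun u hu => by
      rw [mem_filter] at hu ⊢
      exact ⟨hsmall u hu.2, by omega⟩
  have h₁ : #{u | minColor m c u ≤ 1} ≤ #{u ∈ S | minColor m c u - 1 = 0} :=
    card_le_card fun u hu => by
      rw [mem_filter] at hu ⊢
      exact ⟨hsmall u (by omega), by omega⟩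
  have hcount₂ := hc.succ_le_card_minColor_le (j := 2) (by omega) (by omega)
  have hcount₁ := hc.succ_le_card_minColor_le (j := 1) le_rfl (by omega)
  have hS_sum := S.sum_min_two_add_card_filter (minColor m c · - 1)
  have hxy_deg := (highColorGraph c j).degree_add_degree_le hxy
  rw [hdeg x hx.2, hdeg y hy.2, hsum] at hxy_deg
  omega

end Coloring

theorem shiftVec_succ (n : ℕ) (c : Sym2 (Fin (2 * n)) → ℕ) (i : ℕ) :
    shiftVec n c (i + 1) =
      (sortedMins (2 * n) c).getD (2 * i + 2) 0 - (sortedMins (2 * n) c).getD (2 * i) 0 :=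
  rfl

theorem sum_shiftVec {n : ℕ} (c : Sym2 (Fin (2 * n)) → ℕ) {j : ℕ} (hj : j < n) :
    ∑ i ∈ Icc 1 j, shiftVec n c i =
      (sortedMins (2 * n) c).getD (2 * j) 0 - (sortedMins (2 * n) c).getD 0 0 := by
  induction j with
  | zero => simp
  | succ j ih =>
    rw [sum_Icc_succ_top (by omega), ih (by omega), shiftVec_succ, Nat.mul_succ]
    have h₀ := getD_sortedMins_le_getD (c := c) (Nat.zero_le (2 * j)) (by omega)
    have h₁ := getD_sortedMins_le_getD (c := c) (Nat.le_add_right (2 * j) 2) (by omega)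
    omega

/-- If the initial segment `(b_1,…,b_k)` of the shift vector of an interval
coloring of `K_{2n}` is saturated (`b_1 + ⋯ + b_k = 2k - 1`) for some
`2 ≤ k ≤ n-2`, then `b_{k+1} ≤ 1`. -/
theorem statement_16 (n t : ℕ) (c : Sym2 (Fin (2 * n)) → ℕ)
    (hc : IsIntervalColoring (2 * n) t c) (k : ℕ) (hk1 : 2 ≤ k) (hk2 : k ≤ n - 2)
    (hsat : ∑ i ∈ Finset.Icc 1 k, shiftVec n c i = 2 * k - 1) :
    shiftVec n c (k + 1) ≤ 1 := by
  by_contra! hb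
  have hL₀ : 1 ≤ (sortedMins (2 * n) c).getD 0 0 :=
    hc.one_le_getD_sortedMins (by omega) (by omega)
  have hL₂ₖ : 2 * k ≤ (sortedMins (2 * n) c).getD (2 * k) 0 := by
    have htele := sum_shiftVec c (j := k) (by omega)
    have hmono := getD_sortedMins_le_getD (c := c) (Nat.zero_le (2 * k)) (by omega)
    omega
  rw [shiftVec_succ] at hb
  have hA : #{v | minColor (2 * n) c v ≤ 2 * k + 1} = 2 * k + 2 :=
    le_antisymm (card_minColor_le_le_of_lt_getD (by omega) (by omega))
      (hc.succ_le_card_minColor_le (by omega) (by omega))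
  have hlow : #{v | minColor (2 * n) c v ≤ 2 * k - 1} ≤ 2 * k :=
    card_minColor_le_le_of_lt_getD (by omega) (by omega)
  have htop := hc.card_filter_minColor_mem_Icc_le_one (j := 2 * k + 1) (by omega) hA
  have hsplit : #{v | minColor (2 * n) c v ≤ 2 * k + 1} ≤
      #{v | minColor (2 * n) c v ≤ 2 * k - 1} +
        #{v | 2 * k + 1 - 1 ≤ minColor (2 * n) c v ∧ minColor (2 * n) c v ≤ 2 * k + 1} := by
    refine (card_le_card fun v hv => ?_).trans (card_union_le _ _)
    simp only [mem_union, mem_filter, mem_univ, true_and] at hv ⊢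
    omega
  omega
end
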